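/- arXiv:1805.12328 — 4 statements merged into one kernel-verified Lean document; each statement's English description precedes it below -/
import Mathlib

section
/- Let n ≥ 1 and let g and h be n×n positive definite Hermitian complex matrices. Then det g and det h are positive real numbers and (det h / det g)^{1/n} ≤ (1/n)·tr(g⁻¹h). (Arithmetic–geometric mean inequality for the eigenvalues of h relative to g, used in the uniqueness proof via tr_{ω₁}ω₂ ≥ n·e^F.) -/
/-!
Write `g = Bᴴ B`. The congruence `M = (B⁻¹)ᴴ h B⁻¹` is positive semidefinite, with
`tr M = tr (g⁻¹ h)` and `det M = det h / det g`, so the claim is the AM–GM inequality for the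
eigenvalues of `M`.
-/

open Matrix
open scoped ComplexOrder

namespace Matrix

variable {ι : Type*} [Fintype ι] [DecidableEq ι]

theorem PosSemidef.exists_conjTranspose_mul_self_eq {𝕜 : Type*} [RCLike 𝕜] {A : Matrix ι ι 𝕜}
    (hA : A.PosSemidef) : ∃ B : Matrix ι ι 𝕜, Bᴴ * B = A := by
  open scoped MatrixOrder Matrix.Norms.L2Operator in
  obtain ⟨B, rfl⟩ := CStarAlgebra.nonneg_iff_eq_star_mul_self.mp hA.nonneg
  exact ⟨B, rfl⟩

theorem PosSemidef.re_det_rpow_le_re_trace_div {𝕜 : Type*} [RCLike 𝕜] [Nonempty ι]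
    {A : Matrix ι ι 𝕜} (hA : A.PosSemidef) :
    RCLike.re A.det ^ (Fintype.card ι : ℝ)⁻¹ ≤ RCLike.re A.trace / Fintype.card ι := by
  rw [hA.1.det_eq_prod_eigenvalues, hA.1.trace_eq_sum_eigenvalues, ← RCLike.ofReal_prod,
    ← RCLike.ofReal_sum, RCLike.ofReal_re, RCLike.ofReal_re]
  simpa using Real.geom_mean_le_arith_mean Finset.univ (fun _ ↦ 1) hA.1.eigenvalues
    (fun _ _ ↦ zero_le_one) (by simp [Fintype.card_pos]) (fun i _ ↦ hA.eigenvalues_nonneg i)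

variable {K : Type*} [Field K] [StarRing K]

-- No invertibility is needed: for singular `B` both sides vanish, as `B⁻¹ = 0`.

theorem det_conjTranspose_inv_mul_mul_inv (B A : Matrix ι ι K) :
    ((B⁻¹)ᴴ * A * B⁻¹).det = A.det / (Bᴴ * B).det := by
  rw [det_mul, det_mul, det_mul, det_conjTranspose, det_conjTranspose, det_nonsing_inv,
    Ring.inverse_eq_inv, star_inv₀]
  ring

theorem trace_conjTranspose_inv_mul_mul_inv (B A : Matrix ι ι K) :
    ((B⁻¹)ᴴ * A * B⁻¹).trace = ((Bᴴ * B)⁻¹ * A).trace := by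
  rw [Matrix.mul_inv_rev, ← conjTranspose_nonsing_inv, trace_mul_cycle]

end Matrix

/-- Arithmetic–geometric mean inequality for the eigenvalues of `h` relative to `g`:
`(det h / det g)^(1/n) ≤ (1/n) tr(g⁻¹h)`, with both determinants positive reals. -/
theorem det_ratio_rpow_le_trace (n : ℕ) (hn : 1 ≤ n)
    (g h : Matrix (Fin n) (Fin n) ℂ) (hg : g.PosDef) (hh : h.PosDef) :
    0 < (g.det).re ∧ (g.det).im = 0 ∧ 0 < (h.det).re ∧ (h.det).im = 0 ∧
      ((h.det).re / (g.det).re) ^ ((1 : ℝ) / n)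
        ≤ (1 / (n : ℝ)) * ((g⁻¹ * h).trace).re := by
  obtain ⟨hg_re, hg_im⟩ := Complex.pos_iff.mp hg.det_pos
  obtain ⟨hh_re, hh_im⟩ := Complex.pos_iff.mp hh.det_pos
  refine ⟨hg_re, hg_im.symm, hh_re, hh_im.symm, ?_⟩
  have : Nonempty (Fin n) := Fin.pos_iff_nonempty.mp hn
  have hratio : h.det.re / g.det.re = (h.det / g.det).re := by
    rw [Complex.eq_re_of_ofReal_le hg.det_pos.le, Complex.div_ofReal_re, Complex.ofReal_re]
  obtain ⟨B, rfl⟩ := hg.posSemidef.exists_conjTranspose_mul_self_eq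
  rw [hratio, ← det_conjTranspose_inv_mul_mul_inv, ← trace_conjTranspose_inv_mul_mul_inv,
    one_div, inv_mul_eq_div]
  simpa using (hh.posSemidef.conjTranspose_mul_mul_same B⁻¹).re_det_rpow_le_re_trace_div
end

section
/- Let n ≥ 1, let ω₁ and ω₂ be n×n positive definite Hermitian complex matrices, set F = (1/n)·log(det ω₂ / det ω₁), and let t ∈ [0,1]. If F > 0, then (1/(t+1))·(1 − (1/n)·tr(ω₁⁻¹ω₂)) ≤ −F²/4. (This is the pointwise inequality behind the evolution inequality (∂_t − Δ)F ≤ −F²/4 in the proof that Kähler–Einstein metrics with Ric(ω) = −ω are unique.) -/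
open Matrix
open scoped ComplexOrder

/-!
With `S = √ω₂`, the matrix `S ω₁⁻¹ S` is positive definite with trace `tr (ω₁⁻¹ ω₂)` and
determinant `det ω₂ / det ω₁`, so AM–GM on its eigenvalues gives `exp F ≤ tr (ω₁⁻¹ ω₂) / n`.
As `exp F ≥ 1 + F + F² / 2`, the factor `1 - tr (ω₁⁻¹ ω₂) / n` is at most `-F² / 2 ≤ 0`, and
multiplying it by `1 / (t + 1) ≥ 1 / 2` gives the bound.
-/

open scoped MatrixOrder

namespace Matrix

variable {ι 𝕜 : Type*} [Fintype ι] [DecidableEq ι] [RCLike 𝕜] {A B M : Matrix ι ι 𝕜}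

theorem PosSemidef.re_det_rpow_inv_card_le_re_trace_div_card [Nonempty ι] (hM : M.PosSemidef) :
    RCLike.re M.det ^ (Fintype.card ι : ℝ)⁻¹ ≤ RCLike.re M.trace / Fintype.card ι := by
  have key := Real.geom_mean_le_arith_mean Finset.univ (fun _ ↦ 1) hM.1.eigenvalues
    (fun _ _ ↦ zero_le_one) (by simp [Fintype.card_pos]) (fun i _ ↦ hM.eigenvalues_nonneg i)
  simp only [Real.rpow_one, one_mul, Finset.sum_const, Finset.card_univ, nsmul_eq_mul,
    mul_one] at key
  rwa [hM.1.det_eq_prod_eigenvalues, hM.1.trace_eq_sum_eigenvalues, ← RCLike.ofReal_prod,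
    ← RCLike.ofReal_sum, RCLike.ofReal_re, RCLike.ofReal_re]

theorem PosDef.sqrt_mul_inv_mul_sqrt (hA : A.PosDef) (hB : B.PosDef) :
    (CFC.sqrt B * A⁻¹ * CFC.sqrt B).PosDef := by
  have hS : IsUnit (CFC.sqrt B) := (CFC.isUnit_sqrt_iff B hB.posSemidef.nonneg).2 hB.isUnit
  have := hS.posDef_star_left_conjugate_iff.2 hA.inv
  rwa [(CFC.sqrt_nonneg B).isSelfAdjoint.star_eq] at this

theorem trace_inv_mul_eq_trace_sqrt_mul_inv_mul_sqrt (hB : B.PosSemidef) :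
    (A⁻¹ * B).trace = (CFC.sqrt B * A⁻¹ * CFC.sqrt B).trace := by
  conv_lhs => rw [← CFC.sqrt_mul_sqrt_self B hB.nonneg, ← mul_assoc, trace_mul_comm]
  rw [mul_assoc]

theorem det_sqrt_mul_inv_mul_sqrt (hB : B.PosSemidef) :
    (CFC.sqrt B * A⁻¹ * CFC.sqrt B).det = B.det / A.det := by
  rw [det_mul, det_mul, mul_right_comm, ← det_mul, CFC.sqrt_mul_sqrt_self B hB.nonneg,
    det_nonsing_inv, Ring.inverse_eq_inv, div_eq_mul_inv]

theorem PosDef.re_det_div_rpow_le_re_trace_inv_mul_div [Nonempty ι] (hA : A.PosDef)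
    (hB : B.PosDef) :
    (RCLike.re B.det / RCLike.re A.det) ^ (Fintype.card ι : ℝ)⁻¹ ≤
      RCLike.re (A⁻¹ * B).trace / Fintype.card ι := by
  have h := (hA.sqrt_mul_inv_mul_sqrt hB).posSemidef.re_det_rpow_inv_card_le_re_trace_div_card
  rw [det_sqrt_mul_inv_mul_sqrt hB.posSemidef,
    ← trace_inv_mul_eq_trace_sqrt_mul_inv_mul_sqrt hB.posSemidef] at h
  obtain ⟨a, -, ha⟩ := RCLike.pos_iff_exists_ofReal.1 hA.det_pos
  rw [← ha, RCLike.div_re_ofReal] at h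
  rwa [← ha, RCLike.ofReal_re]

end Matrix

theorem one_div_add_one_mul_one_sub_le_neg_sq_div_four_of_exp_le {F T t : ℝ} (hF : 0 ≤ F)
    (hT : Real.exp F ≤ T) (ht₀ : -1 < t) (ht₁ : t ≤ 1) :
    1 / (t + 1) * (1 - T) ≤ -F ^ 2 / 4 := by
  have hT' : 1 - T ≤ -F ^ 2 / 2 := by linarith [Real.quadratic_le_exp_of_nonneg hF]
  calc 1 / (t + 1) * (1 - T) ≤ 1 / 2 * (1 - T) :=
        mul_le_mul_of_nonpos_right (one_div_le_one_div_of_le (by linarith) (by linarith))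
          (by linarith [sq_nonneg F])
    _ ≤ -F ^ 2 / 4 := by linarith

/-- Pointwise inequality behind `(∂ₜ − Δ)F ≤ −F²/4` in the uniqueness proof for
Kähler–Einstein metrics with `Ric(ω) = −ω`. -/
theorem uniqueness_pointwise_ineq (n : ℕ) (hn : 1 ≤ n)
    (ω₁ ω₂ : Matrix (Fin n) (Fin n) ℂ) (h₁ : ω₁.PosDef) (h₂ : ω₂.PosDef)
    (t : ℝ) (ht : t ∈ Set.Icc (0 : ℝ) 1)
    (F : ℝ) (hF : F = (1 / (n : ℝ)) * Real.log ((ω₂.det).re / (ω₁.det).re))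
    (hFpos : 0 < F) :
    (1 / (t + 1)) * (1 - (1 / (n : ℝ)) * ((ω₁⁻¹ * ω₂).trace).re) ≤ -F ^ 2 / 4 := by
  have : Nonempty (Fin n) := ⟨⟨0, hn⟩⟩
  have hamgm := h₁.re_det_div_rpow_le_re_trace_inv_mul_div h₂
  simp only [Fintype.card_fin, RCLike.re_to_complex] at hamgm
  have hratio : 0 < ω₂.det.re / ω₁.det.re :=
    div_pos (RCLike.pos_iff.1 h₂.det_pos).1 (RCLike.pos_iff.1 h₁.det_pos).1
  have hexp : Real.exp F ≤ 1 / n * (ω₁⁻¹ * ω₂).trace.re := by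
    rwa [hF, mul_comm, ← Real.rpow_def_of_pos hratio, one_div_mul_eq_div, one_div]
  exact one_div_add_one_mul_one_sub_le_neg_sq_div_four_of_exp_le hFpos.le hexp
    (by linarith [ht.1]) ht.2
end

section
/- Let T > 0, α > 0, β ≥ 0, and let u : [0,T] → ℝ be differentiable and satisfy u'(t) ≤ −α·u(t)² + β at every t ∈ [0,T] at which u(t) > 0. Then for every t ∈ (0,T], t·u(t) ≤ (1 + √(1 + 4αβT²))/(2α). (ODE version of Lemma 5.4: the quantity t·u(t) is bounded by considering a point where it attains its maximum, exactly as in the maximum-principle argument of the paper.) -/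
/-!
Let `t₀` maximise `f t = t * u t` on `[0, T]`. If `f t₀ > 0` then `t₀ > 0` and `u t₀ > 0`, and since
`t₀` can be approached from the left, `f' t₀ = u t₀ + t₀ u' t₀ ≥ 0`. Multiplying the differential
inequality by `t₀²` gives `α f(t₀)² ≤ f(t₀) + β t₀² ≤ f(t₀) + β T²`, and solving this quadratic
inequality bounds `f(t₀)`, hence `f` on all of `[0, T]`.
-/

open Set

theorem IsLocalMaxOn.hasDerivWithinAt_nonneg_of_Icc_subset {f : ℝ → ℝ} {f' : ℝ} {s : Set ℝ}
    {a b : ℝ} (hmax : IsLocalMaxOn f s b) (hf : HasDerivWithinAt f f' s b) (hab : a < b)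
    (hs : Icc a b ⊆ s) : 0 ≤ f' := by
  have hcone : a - b ∈ posTangentConeAt s b :=
    sub_mem_posTangentConeAt_of_segment_subset (by rwa [segment_symm, segment_eq_Icc hab.le])
  have hnonpos := hmax.hasFDerivWithinAt_nonpos hf.hasFDerivWithinAt hcone
  simp only [ContinuousLinearMap.toSpanSingleton_apply, smul_eq_mul] at hnonpos
  nlinarith

theorem le_of_mul_sq_le_add {α c x : ℝ} (hα : 0 < α) (h : α * x ^ 2 ≤ x + c) :
    x ≤ (1 + √(1 + 4 * α * c)) / (2 * α) := by
  have hsq : (2 * α * x - 1) ^ 2 ≤ 1 + 4 * α * c := by nlinarith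
  rw [le_div_iff₀ (by positivity)]
  linarith [le_abs_self (2 * α * x - 1), Real.abs_le_sqrt hsq]

theorem ode_lemma_5_4_general (T α β : ℝ) (hα : 0 < α) (hβ : 0 ≤ β)
    (u u' : ℝ → ℝ)
    (hderiv : ∀ t ∈ Set.Icc (0 : ℝ) T, HasDerivWithinAt u (u' t) (Set.Icc 0 T) t)
    (hineq : ∀ t ∈ Set.Icc (0 : ℝ) T, 0 < u t → u' t ≤ -α * (u t) ^ 2 + β) :
    ∀ t ∈ Set.Ioc (0 : ℝ) T,
      t * u t ≤ (1 + Real.sqrt (1 + 4 * α * β * T ^ 2)) / (2 * α) := by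
  intro t ht
  have hcont : ContinuousOn (fun s => s * u s) (Icc 0 T) :=
    continuousOn_id.mul fun s hs => (hderiv s hs).continuousWithinAt
  obtain ⟨t₀, ht₀, hmax⟩ :=
    isCompact_Icc.exists_isMaxOn ⟨t, ht.1.le, ht.2⟩ hcont
  refine (hmax ⟨ht.1.le, ht.2⟩).trans ?_
  rcases le_or_gt (t₀ * u t₀) 0 with hneg | hpos
  · exact hneg.trans (by positivity)
  have ht₀pos : 0 < t₀ := lt_of_le_of_ne ht₀.1 (by rintro rfl; simp at hpos)
  have hu : 0 < u t₀ := pos_of_mul_pos_right hpos ht₀.1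
  have hderiv_nonneg : 0 ≤ 1 * u t₀ + t₀ * u' t₀ :=
    hmax.localize.hasDerivWithinAt_nonneg_of_Icc_subset
      ((hasDerivWithinAt_id t₀ _).mul (hderiv t₀ ht₀)) ht₀pos
      (Icc_subset_Icc_right ht₀.2)
  have hβt₀ : β * t₀ ^ 2 ≤ β * T ^ 2 := by gcongr; exact ht₀.2
  have hquad : α * (t₀ * u t₀) ^ 2 ≤ t₀ * u t₀ + β * T ^ 2 := by
    nlinarith [mul_le_mul_of_nonneg_left (hineq t₀ ht₀ hu) (sq_nonneg t₀)]
  simpa only [mul_assoc] using le_of_mul_sq_le_add hα hquad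

/-- ODE version of Lemma 5.4: if `u' ≤ −αu² + β` wherever `u > 0` on `[0,T]`,
then `t·u(t) ≤ (1 + √(1 + 4αβT²))/(2α)` on `(0,T]`. -/
theorem ode_lemma_5_4 (T α β : ℝ) (hT : 0 < T) (hα : 0 < α) (hβ : 0 ≤ β)
    (u u' : ℝ → ℝ)
    (hderiv : ∀ t ∈ Set.Icc (0 : ℝ) T, HasDerivWithinAt u (u' t) (Set.Icc 0 T) t)
    (hineq : ∀ t ∈ Set.Icc (0 : ℝ) T, 0 < u t → u' t ≤ -α * (u t) ^ 2 + β) :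
    ∀ t ∈ Set.Ioc (0 : ℝ) T,
      t * u t ≤ (1 + Real.sqrt (1 + 4 * α * β * T ^ 2)) / (2 * α) :=
  ode_lemma_5_4_general T α β hα hβ u u' hderiv hineq
end

section
/- With τ, f', φ, and 𝔉 as in the context: for every integer k ≥ 1 there exists a constant C_k > 0 (depending on τ, φ and k) such that |𝔉^{(k)}(s)| ≤ C_k·exp(k·𝔉(s)) for all s ∈ [0,1), where 𝔉^{(k)} denotes the k-th derivative of 𝔉. (Lemma 4.2(ii): exp(−k𝔉)·𝔉^{(k)} is uniformly bounded.) -/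
open intervalIntegral


open Set Filter Topology

/-- iterated derivative of `(1-x)⁻¹ - (x-c)⁻¹` away from singularities. -/
lemma aux_iter_inv (c : ℝ) : ∀ (j : ℕ) (s : ℝ), s ≠ 1 → s ≠ c →
    iteratedDeriv j (fun x : ℝ => (1 - x)⁻¹ - (x - c)⁻¹) s
      = (j.factorial : ℝ) * ((1 - s)⁻¹) ^ (j + 1)
        - (-1 : ℝ) ^ j * (j.factorial : ℝ) * ((s - c)⁻¹) ^ (j + 1) := by
  intro j
  induction j with
  | zero => intro s h1 hc; simp [iteratedDeriv_zero]
  | succ j IH =>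
    intro s h1 hc
    have hopen : IsOpen ({x : ℝ | x ≠ 1 ∧ x ≠ c}) := by
      have : {x : ℝ | x ≠ 1 ∧ x ≠ c} = {(1:ℝ)}ᶜ ∩ {c}ᶜ := by
        ext x; simp [and_comm]
      rw [this]
      exact (isOpen_compl_singleton).inter isOpen_compl_singleton
    have hmem : {x : ℝ | x ≠ 1 ∧ x ≠ c} ∈ 𝓝 s := hopen.mem_nhds ⟨h1, hc⟩
    have hev : iteratedDeriv j (fun x : ℝ => (1 - x)⁻¹ - (x - c)⁻¹)
        =ᶠ[𝓝 s] fun x => (j.factorial : ℝ) * ((1 - x)⁻¹) ^ (j + 1)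
          - (-1 : ℝ) ^ j * (j.factorial : ℝ) * ((x - c)⁻¹) ^ (j + 1) :=
      eventually_of_mem hmem (fun x hx => IH x hx.1 hx.2)
    rw [iteratedDeriv_succ, hev.deriv_eq]
    have h1s : (1 : ℝ) - s ≠ 0 := sub_ne_zero.mpr (Ne.symm h1)
    have hcs : s - c ≠ 0 := sub_ne_zero.mpr hc
    have d1 : HasDerivAt (fun y : ℝ => 1 - y) (-1) s := (hasDerivAt_id s).const_sub 1
    have d2 : HasDerivAt (fun y : ℝ => (1 - y)⁻¹) (-(-1) / (1 - s) ^ 2) s := d1.inv h1s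
    have d3 : HasDerivAt (fun y : ℝ => ((1 - y)⁻¹) ^ (j + 1))
        ((j + 1 : ℕ) * ((1 - s)⁻¹) ^ (j + 1 - 1) * (-(-1) / (1 - s) ^ 2)) s := d2.pow (j + 1)
    have d4 : HasDerivAt (fun y : ℝ => y - c) 1 s := (hasDerivAt_id s).sub_const c
    have d5 : HasDerivAt (fun y : ℝ => (y - c)⁻¹) (-1 / (s - c) ^ 2) s := d4.inv hcs
    have d6 : HasDerivAt (fun y : ℝ => ((y - c)⁻¹) ^ (j + 1))
        ((j + 1 : ℕ) * ((s - c)⁻¹) ^ (j + 1 - 1) * (-1 / (s - c) ^ 2)) s := d5.pow (j + 1)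
    have D : HasDerivAt (fun x => (j.factorial : ℝ) * ((1 - x)⁻¹) ^ (j + 1)
          - (-1 : ℝ) ^ j * (j.factorial : ℝ) * ((x - c)⁻¹) ^ (j + 1))
        ((j.factorial : ℝ) * ((j + 1 : ℕ) * ((1 - s)⁻¹) ^ (j + 1 - 1) * (-(-1) / (1 - s) ^ 2))
          - (-1 : ℝ) ^ j * (j.factorial : ℝ)
            * ((j + 1 : ℕ) * ((s - c)⁻¹) ^ (j + 1 - 1) * (-1 / (s - c) ^ 2))) s :=
      (d3.const_mul _).sub (d6.const_mul _)
    rw [D.deriv]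
    simp only [Nat.add_sub_cancel, Nat.factorial_succ, pow_succ]
    push_cast
    field_simp


open Set Filter Topology

lemma aux_iterWithin_open {f : ℝ → ℝ} {U : Set ℝ} (n : ℕ) (hU : IsOpen U) :
    Set.EqOn (iteratedDerivWithin n f U) (iteratedDeriv n f) U := fun x hx => by
  rw [iteratedDerivWithin_eq_iteratedFDerivWithin, iteratedDeriv_eq_iteratedFDeriv,
      iteratedFDerivWithin_of_isOpen n hU hx]

lemma aux_iterWithin_eq {f : ℝ → ℝ} {U s : Set ℝ} (hU : IsOpen U) (hf : ContDiffOn ℝ (⊤ : ℕ∞) f U)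
    (hs : UniqueDiffOn ℝ s) (hsU : s ⊆ U) :
    ∀ n, ∀ x ∈ s, iteratedDerivWithin n f s x = iteratedDeriv n f x := by
  intro n
  induction n with
  | zero => intro x hx; simp [iteratedDerivWithin_zero, iteratedDeriv_zero]
  | succ n IH =>
    intro x hx
    have hEq : Set.EqOn (iteratedDerivWithin n f s) (iteratedDeriv n f) s := fun y hy => IH y hy
    have h1 : DifferentiableWithinAt ℝ (iteratedDerivWithin n f U) U x :=
      ((hf : ContDiffOn ℝ ((⊤:ℕ∞) : WithTop ℕ∞) f U).differentiableOn_iteratedDerivWithin (m := n)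
        (by exact_mod_cast WithTop.coe_lt_coe.mpr (WithTop.coe_lt_top n)) hU.uniqueDiffOn) x (hsU hx)
    have h2 : DifferentiableAt ℝ (iteratedDerivWithin n f U) x :=
      h1.differentiableAt (hU.mem_nhds (hsU hx))
    have hev : iteratedDerivWithin n f U =ᶠ[𝓝 x] iteratedDeriv n f :=
      eventually_of_mem (hU.mem_nhds (hsU hx)) (fun y hy => aux_iterWithin_open n hU hy)
    have hdiff : DifferentiableAt ℝ (iteratedDeriv n f) x := h2.congr_of_eventuallyEq hev.symm
    rw [iteratedDerivWithin_succ, derivWithin_congr hEq (IH x hx),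
      hdiff.derivWithin (hs x hx), iteratedDeriv_succ]

open Set Filter Topology in
set_option maxHeartbeats 2000000 in
/-- Lemma 4.2(ii): every derivative of `𝔉(s) = ∫₀ˢ φ(r) f'(r) dr` satisfies
`|𝔉⁽ᵏ⁾| ≤ C_k · exp(k 𝔉)` on `[0,1)`, i.e. `exp(−k𝔉)·𝔉⁽ᵏ⁾` is uniformly bounded. -/
theorem exhaustion_cutoff_derivative_bounds (τ : ℝ) (hτ : τ ∈ Set.Ioo (0 : ℝ) (1 / 8))
    (φ : ℝ → ℝ) (hφsmooth : ContDiff ℝ (⊤ : ℕ∞) φ)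
    (hφ01 : ∀ s, φ s ∈ Set.Icc (0 : ℝ) 1)
    (hφ0 : ∀ s ≤ 1 - τ + τ ^ 2, φ s = 0)
    (hφ1 : ∀ s, 1 - τ + 2 * τ ^ 2 ≤ s → φ s = 1)
    (hφ' : ∀ s, deriv φ s ∈ Set.Icc (0 : ℝ) (2 / τ ^ 2)) :
    let f' : ℝ → ℝ := fun s => if s ≤ 1 - τ then 0
      else (2 * (s - 1 + τ) / τ ^ 2) / (1 - ((s - 1 + τ) / τ) ^ 2)
    let F : ℝ → ℝ := fun s => ∫ r in (0 : ℝ)..s, φ r * f' r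
    ∀ k : ℕ, 1 ≤ k → ∃ C : ℝ, 0 < C ∧
      ∀ s ∈ Set.Ico (0 : ℝ) 1,
        |iteratedDerivWithin k F (Set.Ico 0 1) s| ≤ C * Real.exp (k * F s) := by
  intro f' F k hk
  obtain ⟨hτ0, hτ8⟩ := hτ
  set G : ℝ → ℝ := fun s => φ s * ((2 * (s - 1 + τ) / τ ^ 2) / (1 - ((s - 1 + τ) / τ) ^ 2))
    with hGdef
  -- the integrand equals G everywhere
  have hGf : ∀ r : ℝ, φ r * f' r = G r := by
    intro r
    by_cases h : r ≤ 1 - τ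
    · have hφr : φ r = 0 := hφ0 r (by nlinarith)
      simp [f', hGdef, hφr, h]
    · simp [f', hGdef, h]
  have hFG : F = fun s => ∫ r in (0 : ℝ)..s, G r := by
    funext s
    exact intervalIntegral.integral_congr fun r _ => hGf r
  -- positivity of f'-part of G on [0,1)
  have hGnonneg : ∀ r : ℝ, r < 1 → 0 ≤ G r := by
    intro r hr
    by_cases h : r ≤ 1 - τ
    · have hφr : φ r = 0 := hφ0 r (by nlinarith)
      simp [hGdef, hφr]
    · push_neg at h
      have hu0 : 0 < r - 1 + τ := by linarith
      have hu1 : (r - 1 + τ) / τ < 1 := by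
        rw [div_lt_one hτ0]; linarith
      have hden : 0 < 1 - ((r - 1 + τ) / τ) ^ 2 := by
        have : 0 < (r - 1 + τ) / τ := div_pos hu0 hτ0
        nlinarith
      exact mul_nonneg (hφ01 r).1 (le_of_lt (div_pos (by positivity) hden))
  -- G is smooth on Iio 1
  have hGsmooth : ContDiffOn ℝ (⊤ : ℕ∞) G (Set.Iio 1) := by
    intro x hx
    apply ContDiffAt.contDiffWithinAt
    by_cases hx1 : x < 1 - τ + τ ^ 2
    · have hev : G =ᶠ[𝓝 x] fun _ => (0 : ℝ) :=
        eventually_of_mem (Iio_mem_nhds hx1) (fun y hy => by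
          have : φ y = 0 := hφ0 y (le_of_lt hy)
          simp [hGdef, this])
      exact (contDiffAt_const (c := (0:ℝ))).congr_of_eventuallyEq hev
    · push_neg at hx1
      have hxτ : 1 - τ < x := by nlinarith
      have hx1' : x < 1 := hx
      have hu0 : 0 < x - 1 + τ := by linarith
      have hu1 : (x - 1 + τ) / τ < 1 := by rw [div_lt_one hτ0]; linarith
      have hden : (1 : ℝ) - ((x - 1 + τ) / τ) ^ 2 ≠ 0 := by
        have : 0 < (x - 1 + τ) / τ := div_pos hu0 hτ0
        nlinarith
      exact ((hφsmooth.of_le (by simp) : ContDiff ℝ (⊤:ℕ∞) φ).contDiffAt).mul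
        (((by fun_prop (disch := intros; positivity) : ContDiff ℝ (⊤:ℕ∞) (fun s : ℝ => 2 * (s - 1 + τ) / τ ^ 2)).contDiffAt).div
          (((by fun_prop (disch := intros; positivity) : ContDiff ℝ (⊤:ℕ∞) (fun s : ℝ => 1 - ((s - 1 + τ) / τ) ^ 2)).contDiffAt))
          hden)
  have hGcont : ContinuousOn G (Set.Iio 1) := hGsmooth.continuousOn
  -- interval integrability up to any point below 1
  have hGint : ∀ a b : ℝ, a < 1 → b < 1 → IntervalIntegrable G MeasureTheory.volume a b := by
    intro a b ha hb
    apply ContinuousOn.intervalIntegrable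
    apply hGcont.mono
    intro y hy
    rcases Set.mem_uIcc.mp hy with ⟨_, h2⟩ | ⟨_, h2⟩ <;> exact lt_of_le_of_lt h2 (by assumption)
  -- F has derivative G below 1
  have hFderiv : ∀ x : ℝ, x < 1 → HasDerivAt F (G x) x := by
    intro x hx
    rw [hFG]
    exact intervalIntegral.integral_hasDerivAt_right (hGint 0 x one_pos hx)
      ((hGcont.stronglyMeasurableAtFilter isOpen_Iio) x hx)
      (hGcont.continuousAt (Iio_mem_nhds hx))
  -- F is smooth on Iio 1
  have hFsmooth : ContDiffOn ℝ (⊤ : ℕ∞) F (Set.Iio 1) := by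
    rw [contDiffOn_infty_iff_deriv_of_isOpen isOpen_Iio]
    refine ⟨fun x hx => ((hFderiv x hx).differentiableAt).differentiableWithinAt, ?_⟩
    exact hGsmooth.congr fun x hx => (hFderiv x hx).deriv
  -- F is nonnegative on [0,1)
  have hFnonneg : ∀ s ∈ Set.Ico (0:ℝ) 1, 0 ≤ F s := by
    intro s hs
    rw [hFG]
    apply intervalIntegral.integral_nonneg hs.1
    intro u hu
    exact hGnonneg u (lt_of_le_of_lt hu.2 hs.2)
  obtain ⟨m, rfl⟩ : ∃ m, k = m + 1 := ⟨k - 1, (Nat.succ_pred_eq_of_pos hk).symm⟩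
  -- reduce iteratedDerivWithin to iteratedDeriv of G
  have hred : ∀ s ∈ Set.Ico (0:ℝ) 1,
      iteratedDerivWithin (m + 1) F (Set.Ico 0 1) s = iteratedDeriv m G s := by
    intro s hs
    rw [aux_iterWithin_eq isOpen_Iio hFsmooth (uniqueDiffOn_Ico 0 1)
        (fun y hy => hy.2) (m+1) s hs]
    rw [iteratedDeriv_succ']
    exact Filter.EventuallyEq.iteratedDeriv_eq m
      (eventually_of_mem (Iio_mem_nhds hs.2) (fun y hy => (hFderiv y hy).deriv))

  -- tail region setup
  set b : ℝ := 1 - τ/2 with hbdef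
  set c : ℝ := 1 - 2*τ with hcdef
  have hb1 : b < 1 := by rw [hbdef]; linarith
  have hb0 : (0:ℝ) < b := by rw [hbdef]; linarith
  have hb'b : 1 - τ + 2*τ^2 < b := by rw [hbdef]; nlinarith
  -- G equals the rational function on (1-τ+2τ², 1)
  have hGr : ∀ x : ℝ, 1 - τ + 2*τ^2 < x → x < 1 → G x = (1-x)⁻¹ - (x - c)⁻¹ := by
    intro x hx1 hx2
    have hφx : φ x = 1 := hφ1 x (le_of_lt hx1)
    have h1x : (0:ℝ) < 1 - x := by linarith
    have hxc : (0:ℝ) < x - c := by rw [hcdef]; nlinarith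
    have hden : (1:ℝ) - ((x-1+τ)/τ)^2 ≠ 0 := by
      have h : (1:ℝ) - ((x-1+τ)/τ)^2 = (1-x)*(x-c)/τ^2 := by
        rw [hcdef]; field_simp; ring
      rw [h]; positivity
    rw [hGdef]
    simp only [hφx, one_mul]
    rw [hcdef] at hxc ⊢
    rw [div_eq_iff hden]
    field_simp
    ring
  have hLdeep : ∀ x : ℝ, 1 - τ + 2*τ^2 < x → x < 1 →
      HasDerivAt (fun y => -Real.log (1-y) - Real.log (y - c)) (G x) x := by
    intro x hx1 hx2
    have h1x : (0:ℝ) < 1 - x := by linarith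
    have hxc : (0:ℝ) < x - c := by rw [hcdef]; nlinarith
    have d1 : HasDerivAt (fun y : ℝ => 1 - y) (-1) x := (hasDerivAt_id x).const_sub 1
    have d2 : HasDerivAt (fun y : ℝ => Real.log (1 - y)) ((1-x)⁻¹ * (-1)) x :=
      (Real.hasDerivAt_log (ne_of_gt h1x)).comp x d1
    have d3 : HasDerivAt (fun y : ℝ => y - c) 1 x := (hasDerivAt_id x).sub_const c
    have d4 : HasDerivAt (fun y : ℝ => Real.log (y - c)) ((x-c)⁻¹ * 1) x :=
      by convert d3.log (ne_of_gt hxc) using 1; ring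
    have D : HasDerivAt (fun y => -Real.log (1-y) - Real.log (y - c))
        (-((1-x)⁻¹ * (-1)) - (x-c)⁻¹ * 1) x := (d2.neg).sub d4
    convert D using 1
    rw [hGr x hx1 hx2]; ring
  have hFtail : ∀ s ∈ Set.Ico b 1, F s = F b +
      ((-Real.log (1-s) - Real.log (s-c)) - (-Real.log (1-b) - Real.log (b-c))) := by
    intro s hs
    have h2 : IntervalIntegrable G MeasureTheory.volume b s := hGint b s hb1 hs.2
    have hsplit : F s = F b + ∫ r in b..s, G r := by
      rw [hFG]
      simp only
      rw [← intervalIntegral.integral_add_adjacent_intervals (hGint 0 b one_pos hb1) h2]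
    rw [hsplit]
    congr 1
    apply intervalIntegral.integral_eq_sub_of_hasDerivAt
    · intro x hx
      rw [Set.uIcc_of_le hs.1] at hx
      exact hLdeep x (lt_of_lt_of_le hb'b hx.1) (lt_of_le_of_lt hx.2 hs.2)
    · exact h2
  set c₁ : ℝ := Real.exp (F b - (-Real.log (1-b) - Real.log (b-c))) with hc₁def
  have hc₁ : 0 < c₁ := Real.exp_pos _
  have hExp : ∀ s ∈ Set.Ico b 1, Real.exp (F s) = c₁ * ((1-s)*(s-c))⁻¹ := by
    intro s hs
    have h1s : (0:ℝ) < 1 - s := by linarith [hs.2]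
    have hsc : (0:ℝ) < s - c := by
      rw [hcdef]; have := hs.1; rw [hbdef] at this; nlinarith
    rw [hFtail s hs, show F b + ((-Real.log (1-s) - Real.log (s-c))
        - (-Real.log (1-b) - Real.log (b-c)))
      = (F b - (-Real.log (1-b) - Real.log (b-c)))
        + (-(Real.log (1-s) + Real.log (s-c))) from by ring]
    rw [Real.exp_add, hc₁def]
    congr 1
    rw [Real.exp_neg, ← Real.log_mul (ne_of_gt h1s) (ne_of_gt hsc),
      Real.exp_log (by positivity)]
  have hIterTail : ∀ s ∈ Set.Ico b 1, iteratedDeriv m G s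
      = (m.factorial : ℝ) * ((1-s)⁻¹)^(m+1)
        - (-1:ℝ)^m * (m.factorial : ℝ) * ((s-c)⁻¹)^(m+1) := by
    intro s hs
    have hso : s ∈ Set.Ioo (1 - τ + 2*τ^2) 1 := ⟨lt_of_lt_of_le hb'b hs.1, hs.2⟩
    have hsc : (0:ℝ) < s - c := by
      rw [hcdef]; have := hs.1; rw [hbdef] at this; nlinarith
    have hev : G =ᶠ[𝓝 s] fun x => (1-x)⁻¹ - (x-c)⁻¹ :=
      eventually_of_mem (isOpen_Ioo.mem_nhds hso) (fun y hy => hGr y hy.1 hy.2)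
    rw [hev.iteratedDeriv_eq m,
      aux_iter_inv c m s (ne_of_lt hs.2) (by intro h; rw [h] at hsc; simp at hsc)]
  -- continuity of iteratedDeriv m G on Iio 1 and compact bound
  have hcont : ContinuousOn (iteratedDeriv m G) (Set.Iio 1) := by
    have h := hGsmooth.continuousOn_iteratedDerivWithin (m := m) (by exact_mod_cast le_top)
      isOpen_Iio.uniqueDiffOn
    exact h.congr fun x hx => (aux_iterWithin_open m isOpen_Iio hx).symm
  obtain ⟨C₁, hC₁⟩ := (isCompact_Icc (a := (0:ℝ)) (b := b)).exists_bound_of_continuousOn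
    (hcont.mono (fun y hy => lt_of_le_of_lt hy.2 hb1))
  set C₂ : ℝ := (m.factorial : ℝ) * ((2*τ)^(m+1) + 1) * (c₁⁻¹)^(m+1) with hC₂def
  have hC₂0 : 0 ≤ C₂ := by positivity
  refine ⟨max C₁ C₂ + 1, by positivity, ?_⟩
  intro s hs
  have hFs0 : 0 ≤ F s := hFnonneg s hs
  have hone : 1 ≤ Real.exp ((m+1 : ℕ) * F s) :=
    Real.one_le_exp (by positivity)
  have hexp0 : (0:ℝ) ≤ Real.exp ((m+1 : ℕ) * F s) := le_of_lt (Real.exp_pos _)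
  have hCmax : (0:ℝ) ≤ max C₁ C₂ + 1 := by positivity
  rw [hred s hs]
  by_cases hsb : s ≤ b
  · have h1 : |iteratedDeriv m G s| ≤ C₁ := by
      have := hC₁ s ⟨hs.1, hsb⟩
      rwa [Real.norm_eq_abs] at this
    calc |iteratedDeriv m G s| ≤ C₁ := h1
      _ ≤ (max C₁ C₂ + 1) * 1 := by rw [mul_one]; linarith [le_max_left C₁ C₂]
      _ ≤ (max C₁ C₂ + 1) * Real.exp ((m+1 : ℕ) * F s) := by
          exact mul_le_mul_of_nonneg_left hone hCmax
  · push_neg at hsb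
    have hs' : s ∈ Set.Ico b 1 := ⟨le_of_lt hsb, hs.2⟩
    have h1s : (0:ℝ) < 1 - s := by linarith [hs.2]
    have hsc : (0:ℝ) < s - c := by
      rw [hcdef]; rw [hbdef] at hsb; nlinarith
    have hsc2 : s - c ≤ 2*τ := by rw [hcdef]; linarith [hs.2]
    have h1s1 : 1 - s ≤ 1 := by linarith [hs.1]
    set X : ℝ := (((1-s)*(s-c))⁻¹)^(m+1) with hXdef
    have hX0 : 0 ≤ X := by positivity
    have hExpEq : Real.exp ((m+1 : ℕ) * F s) = c₁^(m+1) * X := by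
      rw [Real.exp_nat_mul, hExp s hs', mul_pow]
    have hA2 : ((1-s)⁻¹)^(m+1) ≤ (2*τ)^(m+1) * X := by
      have hrw : (1-s)⁻¹ = (s-c) * ((1-s)*(s-c))⁻¹ := by
        field_simp
      rw [hrw, hXdef, mul_pow]
      gcongr
    have hB2 : ((s-c)⁻¹)^(m+1) ≤ 1 * X := by
      have hrw : (s-c)⁻¹ = (1-s) * ((1-s)*(s-c))⁻¹ := by
        field_simp
      rw [hrw, hXdef, mul_pow, one_mul]
      calc (1-s)^(m+1) * (((1-s)*(s-c))⁻¹)^(m+1)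
          ≤ 1^(m+1) * (((1-s)*(s-c))⁻¹)^(m+1) := by gcongr
        _ = (((1-s)*(s-c))⁻¹)^(m+1) := by rw [one_pow, one_mul]
    have hABS : |iteratedDeriv m G s|
        ≤ (m.factorial : ℝ) * ((1-s)⁻¹)^(m+1) + (m.factorial : ℝ) * ((s-c)⁻¹)^(m+1) := by
      rw [hIterTail s hs']
      refine (abs_sub _ _).trans ?_
      have e1 : |(m.factorial : ℝ) * ((1-s)⁻¹)^(m+1)|
          = (m.factorial : ℝ) * ((1-s)⁻¹)^(m+1) := abs_of_nonneg (by positivity)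
      have e2 : |(-1:ℝ)^m * (m.factorial : ℝ) * ((s-c)⁻¹)^(m+1)|
          = (m.factorial : ℝ) * ((s-c)⁻¹)^(m+1) := by
        rw [abs_mul, abs_mul, abs_pow, abs_neg, abs_one, one_pow, one_mul,
          abs_of_nonneg (by positivity : (0:ℝ) ≤ (m.factorial : ℝ)),
          abs_of_nonneg (by positivity : (0:ℝ) ≤ ((s-c)⁻¹)^(m+1))]
      rw [e1, e2]
    have hfinal : (m.factorial : ℝ) * ((1-s)⁻¹)^(m+1) + (m.factorial : ℝ) * ((s-c)⁻¹)^(m+1)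
        ≤ C₂ * Real.exp ((m+1 : ℕ) * F s) := by
      have step : (m.factorial : ℝ) * ((1-s)⁻¹)^(m+1) + (m.factorial : ℝ) * ((s-c)⁻¹)^(m+1)
          ≤ (m.factorial : ℝ) * ((2*τ)^(m+1) * X) + (m.factorial : ℝ) * (1 * X) := by
        gcongr
      refine step.trans (le_of_eq ?_)
      rw [hExpEq, hC₂def]
      have hc₁ne : c₁ ≠ 0 := ne_of_gt hc₁
      have hP : (c₁⁻¹)^(m+1) * c₁^(m+1) = 1 := by rw [← mul_pow, inv_mul_cancel₀ hc₁ne, one_pow]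
      linear_combination (-(m.factorial:ℝ) * ((2*τ)^(m+1)+1) * X) * hP
    calc |iteratedDeriv m G s| ≤ C₂ * Real.exp ((m+1 : ℕ) * F s) := hABS.trans hfinal
      _ ≤ (max C₁ C₂ + 1) * Real.exp ((m+1 : ℕ) * F s) := by
          exact mul_le_mul_of_nonneg_right (by linarith [le_max_right C₁ C₂]) hexp0
end
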